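/- arXiv:2512.16761 — 2 statements merged into one kernel-verified Lean document; each statement's English description precedes it below -/
import Mathlib

section
/- Let λ > 0 and 0 ≤ x̄, x ≤ P_max. Then the KL divergence between Poisson(λ + x̄) and Poisson(λ + x) satisfies D(Poisson(λ + x̄) ‖ Poisson(λ + x)) ≤ (λ + P_max)·log((λ + P_max)/λ) + P_max·log(e) ≤ log(e)·(λ + P_max)²/λ + P_max·log(e). -/
/-! The divergence between two Poisson laws has the closed form
`D(Poisson(a) ‖ Poisson(b)) = (b - a) log e + a log (a / b)`, because the log-likelihood ratio
`(b - a) + y log (a / b)` is affine in `y` and the Poisson mean is `a`. With `a = λ + x̄ ≤ λ + P_max`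
and `b = λ + x ≥ λ`, the first term is at most `P_max log e` and the second at most
`(λ + P_max) log ((λ + P_max) / λ)`; the last bound is `log t ≤ t`. -/

/-- The Poisson probability mass function with mean `μ`. -/
noncomputable def poissonPMF (μ : ℝ) (y : ℕ) : ℝ :=
  Real.exp (-μ) * μ ^ y / (Nat.factorial y)

/-- KL divergence in bits between pmfs on `ℕ`. -/
noncomputable def klBits (P Q : ℕ → ℝ) : ℝ := ∑' y, P y * Real.logb 2 (P y / Q y)

open Real

lemma hasSum_poissonPMF (a : ℝ) : HasSum (poissonPMF a) 1 := by
  show HasSum (fun y => poissonPMF a y) 1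
  have h := (NormedSpace.expSeries_div_hasSum_exp a).mul_left (exp (-a))
  rw [← exp_eq_exp_ℝ, ← exp_add, neg_add_cancel, exp_zero] at h
  simpa only [poissonPMF, mul_div_assoc] using h

lemma poissonPMF_succ (a : ℝ) (n : ℕ) :
    ((n : ℝ) + 1) * poissonPMF a (n + 1) = a * poissonPMF a n := by
  simp only [poissonPMF, Nat.factorial_succ, pow_succ, Nat.cast_mul, Nat.cast_succ]
  field_simp

lemma hasSum_mul_poissonPMF (a : ℝ) : HasSum (fun y : ℕ => (y : ℝ) * poissonPMF a y) a := by
  rw [← hasSum_nat_add_iff' 1]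
  simpa only [Nat.cast_add, Nat.cast_one, poissonPMF_succ, Finset.sum_range_one,
    Nat.cast_zero, zero_mul, sub_zero, mul_one] using (hasSum_poissonPMF a).mul_left a

lemma poissonPMF_div_poissonPMF {b : ℝ} (a : ℝ) (hb : b ≠ 0) (y : ℕ) :
    poissonPMF a y / poissonPMF b y = exp (b - a) * (a / b) ^ y := by
  have hy : (y.factorial : ℝ) ≠ 0 := by positivity
  simp only [poissonPMF, exp_sub, exp_neg, div_pow]
  field_simp

lemma klBits_poissonPMF {a b : ℝ} (ha : a ≠ 0) (hb : b ≠ 0) :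
    klBits (poissonPMF a) (poissonPMF b)
      = (b - a) * logb 2 (exp 1) + a * logb 2 (a / b) := by
  have hterm : ∀ y : ℕ, poissonPMF a y * logb 2 (poissonPMF a y / poissonPMF b y)
      = (b - a) / log 2 * poissonPMF a y + log (a / b) / log 2 * ((y : ℝ) * poissonPMF a y) := by
    intro y
    rw [poissonPMF_div_poissonPMF a hb, logb,
      log_mul (exp_pos _).ne' (pow_ne_zero y (div_ne_zero ha hb)), log_exp, log_pow]
    ring
  have hsum := ((hasSum_poissonPMF a).mul_left ((b - a) / log 2)).add
    ((hasSum_mul_poissonPMF a).mul_left (log (a / b) / log 2))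
  rw [klBits, tsum_congr hterm, hsum.tsum_eq, logb, logb, log_exp]
  ring

lemma mul_logb_div_le_mul_logb_div {β a b M l : ℝ} (hβ : 1 < β) (ha : 0 < a) (hl : 0 < l)
    (haM : a ≤ M) (hlb : l ≤ b) (hlM : l ≤ M) :
    a * logb β (a / b) ≤ M * logb β (M / l) := by
  have hMl : 0 ≤ logb β (M / l) := logb_nonneg hβ ((one_le_div hl).mpr hlM)
  have hdiv : a / b ≤ M / l := div_le_div₀ (ha.le.trans haM) haM hl hlb
  calc a * logb β (a / b) ≤ a * logb β (M / l) :=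
        mul_le_mul_of_nonneg_left (logb_le_logb_of_le hβ (div_pos ha (hl.trans_le hlb)) hdiv)
          ha.le
    _ ≤ M * logb β (M / l) := mul_le_mul_of_nonneg_right haM hMl

lemma logb_le_mul_logb_exp {β t : ℝ} (hβ : 1 < β) (ht : 0 ≤ t) :
    logb β t ≤ t * logb β (exp 1) := by
  rw [logb, logb, log_exp, mul_one_div]
  exact div_le_div_of_nonneg_right (log_le_self ht) (log_pos hβ).le

lemma mul_logb_div_le {β M l : ℝ} (hβ : 1 < β) (hM : 0 ≤ M) (hl : 0 < l) :
    M * logb β (M / l) ≤ logb β (exp 1) * M ^ 2 / l := by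
  calc M * logb β (M / l) ≤ M * (M / l * logb β (exp 1)) :=
        mul_le_mul_of_nonneg_left (logb_le_mul_logb_exp hβ (div_nonneg hM hl.le)) hM
    _ = logb β (exp 1) * M ^ 2 / l := by ring

/-- For `λ > 0` and `0 ≤ x̄, x ≤ P_max`,
`D(Poisson(λ+x̄) ‖ Poisson(λ+x)) ≤ (λ+P_max) log₂((λ+P_max)/λ) + P_max log₂ e
  ≤ log₂ e · (λ+P_max)²/λ + P_max log₂ e`. -/
theorem kl_poisson_peak_bound (lam Pmax xbar x : ℝ) (hlam : 0 < lam)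
    (hxbar : 0 ≤ xbar) (hxbar' : xbar ≤ Pmax) (hx : 0 ≤ x) (hx' : x ≤ Pmax) :
    klBits (poissonPMF (lam + xbar)) (poissonPMF (lam + x))
      ≤ (lam + Pmax) * Real.logb 2 ((lam + Pmax) / lam)
        + Pmax * Real.logb 2 (Real.exp 1) ∧
    (lam + Pmax) * Real.logb 2 ((lam + Pmax) / lam) + Pmax * Real.logb 2 (Real.exp 1)
      ≤ Real.logb 2 (Real.exp 1) * (lam + Pmax) ^ 2 / lam
        + Pmax * Real.logb 2 (Real.exp 1) := by
  have hPmax : 0 ≤ Pmax := hxbar.trans hxbar'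
  have hlog2e : 0 ≤ logb 2 (exp 1) := logb_nonneg one_lt_two (one_le_exp zero_le_one)
  refine ⟨?_, add_le_add_left (mul_logb_div_le one_lt_two (by positivity) hlam) _⟩
  rw [klBits_poissonPMF (by positivity) (by positivity)]
  have hdrift : (lam + x - (lam + xbar)) * logb 2 (exp 1) ≤ Pmax * logb 2 (exp 1) :=
    mul_le_mul_of_nonneg_right (by linarith) hlog2e
  have hratio := mul_logb_div_le_mul_logb_div (b := lam + x) (M := lam + Pmax) one_lt_two
    (by positivity : 0 < lam + xbar) hlam (by linarith) (by linarith) (by linarith)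
  linarith
end

section
/- Let P, Q be probability mass functions on a countable set with Y₁ = {y : Q(y) > P(y)} and Y₂ = its complement. Then Σ_{y∈Y₁} P(y)·log²(P(y)/Q(y)) ≤ log(e)·( D(Q ‖ P) + 1 ). -/
open Real InformationTheory

lemma log_le_half_self {t : ℝ} (ht : 0 < t) : log t ≤ t / 2 := by
  have h := log_le_sub_one_of_pos (half_pos ht)
  rw [log_div ht.ne' two_ne_zero] at h
  linarith [log_two_lt_d9]

lemma sq_log_le_klFun_add {t : ℝ} (ht : 1 ≤ t) : log t ^ 2 ≤ klFun t + (t - 1) / 2 := by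
  have ht0 : 0 < t := by linarith
  have hlog_nonneg : 0 ≤ log t := log_nonneg ht
  have hlog_ge : 1 - t⁻¹ ≤ log t := one_sub_inv_le_log_of_pos ht0
  have hlog_le : log t ≤ t / 2 := log_le_half_self ht0
  have key : (t - 1) / 2 ≤ log t * (t - log t) :=
    calc (t - 1) / 2 = (1 - t⁻¹) * (t / 2) := by field_simp
      _ ≤ log t * (t / 2) := by gcongr
      _ ≤ log t * (t - log t) := by gcongr; linarith
  rw [klFun_apply]
  linarith

lemma mul_logb_div_sq_le {b p q : ℝ} (hp : 0 < p) (hpq : p ≤ q) :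
    p * logb b (p / q) ^ 2 ≤ (p * klFun (q / p) + q / 2) / log b ^ 2 := by
  have ht : 1 ≤ q / p := (one_le_div hp).mpr hpq
  rw [logb, div_pow, ← mul_div_assoc, ← inv_div q p, log_inv, neg_sq]
  gcongr
  calc p * log (q / p) ^ 2 ≤ p * (klFun (q / p) + (q / p - 1) / 2) := by
        gcongr; exact sq_log_le_klFun_add ht
    _ = p * klFun (q / p) + (q - p) / 2 := by field_simp
    _ ≤ p * klFun (q / p) + q / 2 := by linarith

lemma hasSum_mul_klFun_div {α : Type*} {P Q : α → ℝ} {s : ℝ} (hP : ∀ y, P y ≠ 0)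
    (hPs : HasSum P s) (hQs : HasSum Q s) (hD : Summable fun y => Q y * log (Q y / P y)) :
    HasSum (fun y => P y * klFun (Q y / P y)) (∑' y, Q y * log (Q y / P y)) := by
  convert hD.hasSum.add (hPs.sub hQs) using 1
  · ext y
    rw [klFun_apply]
    field_simp [hP y]
    ring
  · ring

/-- For pmfs `P, Q` on a countable set with `Y₁ = {y : Q(y) > P(y)}`,
`Σ_{y∈Y₁} P(y) log₂²(P(y)/Q(y)) ≤ log₂ e · (D(Q‖P) + 1)`. -/
theorem sq_log_bound_via_kl (P Q : ℕ → ℝ)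
    (hP0 : ∀ y, 0 < P y) (hQ0 : ∀ y, 0 ≤ Q y)
    (hP1 : HasSum P 1) (hQ1 : HasSum Q 1)
    (hD : Summable (fun y => Q y * Real.logb 2 (Q y / P y)))
    (hS : Summable (fun y : {y : ℕ // P y < Q y} =>
      P y.1 * (Real.logb 2 (P y.1 / Q y.1)) ^ 2)) :
    (∑' y : {y : ℕ // P y < Q y}, P y.1 * (Real.logb 2 (P y.1 / Q y.1)) ^ 2)
      ≤ Real.logb 2 (Real.exp 1) * (klBits Q P + 1) := by
  have hlog2 : 0 < log 2 := log_pos one_lt_two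
  set D := ∑' y, Q y * log (Q y / P y)
  have hD_nats : Summable fun y => Q y * log (Q y / P y) := by
    simpa only [logb, ← mul_div_assoc, summable_div_const_iff hlog2.ne'] using hD
  have hKL : klBits Q P = D / log 2 := by
    simp only [klBits, logb, ← mul_div_assoc, tsum_div_const, D]
  set g := fun y => (P y * klFun (Q y / P y) + Q y / 2) / log 2 ^ 2
  have hg : HasSum g ((D + 1 / 2) / log 2 ^ 2) :=
    ((hasSum_mul_klFun_div (fun y => (hP0 y).ne') hP1 hQ1 hD_nats).add
      (hQ1.div_const 2)).div_const _
  have hg_nonneg : ∀ y, 0 ≤ g y := fun y =>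
    div_nonneg (add_nonneg (mul_nonneg (hP0 y).le (klFun_nonneg (div_nonneg (hQ0 y) (hP0 y).le)))
      (div_nonneg (hQ0 y) zero_le_two)) (sq_nonneg _)
  calc (∑' y : {y : ℕ // P y < Q y}, P y.1 * (logb 2 (P y.1 / Q y.1)) ^ 2)
      ≤ ∑' y : {y : ℕ // P y < Q y}, g y :=
        hS.tsum_le_tsum (fun y => mul_logb_div_sq_le (hP0 y) y.2.le) (hg.summable.subtype _)
    _ ≤ ∑' y, g y := hg.summable.tsum_subtype_le g _ hg_nonneg
    _ = (D + 1 / 2) / log 2 ^ 2 := hg.tsum_eq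
    _ ≤ logb 2 (exp 1) * (klBits Q P + 1) := by
      rw [hKL, logb, log_exp]
      field_simp
      linarith [log_two_gt_d9]
end
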